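/- arXiv:1009.0855 — 6 statements merged into one kernel-verified Lean document; each statement's English description precedes it below -/
import Mathlib

section
/- Let x₀ = k/2^n be a dyadic rational in [0,1) with k, n nonnegative integers and k < 2^n. Then for all w ∈ [0,1], τ(x₀ + w/2^n) = τ(x₀) + 2^{-n}(τ(w) + D_n(x₀)·w), where D_n(x₀) is the integer slope of the piecewise-linear partial Takagi function τ_n on the interval [k/2^n, (k+1)/2^n]. -/
open Finset

/-- Distance from `t` to the nearest integer. -/
noncomputable def distNearestInt (t : ℝ) : ℝ := ⨅ n : ℤ, |t - (n : ℝ)|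

/-- The Takagi function. -/
noncomputable def takagi (x : ℝ) : ℝ := ∑' n : ℕ, distNearestInt (2 ^ n * x) / 2 ^ n

/-- The partial Takagi function of level `n`. -/
noncomputable def takagiPartial (n : ℕ) (x : ℝ) : ℝ :=
  ∑ j ∈ Finset.range n, distNearestInt (2 ^ j * x) / 2 ^ j

/-- The deficient digit function `D_j` attached to a binary digit sequence `b`
(with `b i` the `(i+1)`-st binary digit): number of 0's minus number of 1's
among the first `j` digits. -/
def defD (b : ℕ → ℕ) (j : ℕ) : ℤ := (j : ℤ) - 2 * ∑ i ∈ Finset.range j, (b i : ℤ)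

/-- `x` is the real number with binary expansion `0.b₁b₂b₃…`, `b i` being digit `i+1`. -/
def IsBinaryExpansion (b : ℕ → ℕ) (x : ℝ) : Prop :=
  (∀ i, b i ≤ 1) ∧ x = ∑' i : ℕ, (b i : ℝ) / 2 ^ (i + 1)

/-- The deficient digit set `Ω^L`. -/
def OmegaL : Set ℝ :=
  {x | ∃ b : ℕ → ℕ, IsBinaryExpansion b x ∧ ∀ j ≥ 1, 0 ≤ defD b j}

lemma dni_eq (t : ℝ) : distNearestInt t = |t - round t| :=
  le_antisymm (ciInf_le ⟨0, fun y ⟨n, hn⟩ => hn ▸ abs_nonneg _⟩ (round t))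
    (le_ciInf fun n => round_le t n)

lemma dni_nonneg (t : ℝ) : 0 ≤ distNearestInt t := by rw [dni_eq]; exact abs_nonneg _

lemma dni_le_half (t : ℝ) : distNearestInt t ≤ 1/2 := by rw [dni_eq]; exact abs_sub_round t

lemma dni_int_add (t : ℝ) (m : ℤ) : distNearestInt (t + m) = distNearestInt t := by
  rw [dni_eq, dni_eq, round_add_intCast]; push_cast; ring_nf

lemma dni_zero : distNearestInt 0 = 0 := by
  rw [dni_eq]; norm_num

lemma dni_half_le (t : ℝ) (h1 : 0 ≤ t) (h2 : t ≤ 1/2) : distNearestInt t = t := by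
  rw [dni_eq, round_eq]
  rcases eq_or_lt_of_le h2 with h | h
  · subst h; norm_num
  · have : ⌊t + 1/2⌋ = 0 := by
      apply Int.floor_eq_zero_iff.2; constructor <;> simp <;> linarith
    rw [this]
    simpa using abs_of_nonneg h1

lemma dni_one_sub (t : ℝ) (h1 : 1/2 ≤ t) (h2 : t ≤ 1) : distNearestInt t = 1 - t := by
  rw [dni_eq, round_eq]
  have : ⌊t + 1/2⌋ = 1 := by
    apply Int.floor_eq_iff.2
    constructor <;> push_cast <;> linarith
  rw [this]
  push_cast
  rw [abs_of_nonpos (by linarith)]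
  ring

lemma takagi_summable (x : ℝ) :
    Summable (fun j : ℕ => distNearestInt (2 ^ j * x) / 2 ^ j) := by
  apply Summable.of_nonneg_of_le
    (fun j => div_nonneg (dni_nonneg _) (by positivity))
    (fun j => ?_) summable_geometric_two
  rw [one_div, inv_pow, ← one_div]
  gcongr
  exact (dni_le_half _).trans (by norm_num)

lemma takagi_int_add (x : ℝ) (m : ℤ) : takagi (x + m) = takagi x := by
  unfold takagi
  refine tsum_congr fun j => ?_
  have : (2:ℝ) ^ j * (x + m) = 2 ^ j * x + ((2 ^ j * m : ℤ) : ℝ) := by push_cast; ring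
  rw [this, dni_int_add]

lemma takagi_zero : takagi 0 = 0 := by
  unfold takagi
  simp [dni_zero]

lemma takagi_functional (x : ℝ) :
    takagi x = distNearestInt x + takagi (2 * x) / 2 := by
  unfold takagi
  rw [Summable.tsum_eq_zero_add (takagi_summable x)]
  congr 1
  · norm_num
  · rw [← tsum_div_const]
    refine tsum_congr fun j => ?_
    rw [pow_succ]
    ring_nf

lemma digits_sum_rec (k : ℕ) :
    ((Nat.digits 2 k).sum : ℝ) = (k % 2 : ℕ) + ((Nat.digits 2 (k / 2)).sum : ℝ) := by
  rcases Nat.eq_zero_or_pos k with rfl | hk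
  · simp
  · rw [Nat.digits_def' (by norm_num) hk]
    push_cast [List.sum_cons]
    ring

lemma takagi_key : ∀ n k : ℕ, k < 2 ^ n → ∀ w : ℝ, w ∈ Set.Icc (0:ℝ) 1 →
    takagi ((k : ℝ) / 2 ^ n + w / 2 ^ n) =
      takagi ((k : ℝ) / 2 ^ n) +
        (1 / 2 ^ n) * (takagi w + ((n : ℝ) - 2 * ((Nat.digits 2 k).sum : ℝ)) * w) := by
  intro n
  induction n with
  | zero =>
    intro k hk w hw
    interval_cases k
    simp [takagi_zero]
  | succ n ih =>
    intro k hk w hw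
    obtain ⟨hw0, hw1⟩ := hw
    obtain ⟨k', b, hb, rfl⟩ : ∃ k' b, (b = 0 ∨ b = 1) ∧ k = 2 * k' + b :=
      ⟨k / 2, k % 2, Nat.mod_two_eq_zero_or_one k, by omega⟩
    have hk' : k' < 2 ^ n := by rw [pow_succ] at hk; omega
    have hs : ((Nat.digits 2 (2 * k' + b)).sum : ℝ)
        = (b : ℝ) + ((Nat.digits 2 k').sum : ℝ) := by
      have e1 : (2 * k' + b) % 2 = b := by omega
      have e2 : (2 * k' + b) / 2 = k' := by omega
      rw [digits_sum_rec, e1, e2]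
    have hbR0 : (0:ℝ) ≤ (b:ℝ) := Nat.cast_nonneg b
    have hbR1 : (b:ℝ) ≤ 1 := by rcases hb with h | h <;> simp [h]
    have h1 : ((2 * k' + b : ℕ) : ℝ) / 2 ^ (n+1) + w / 2 ^ (n+1)
        = (k' : ℝ) / 2 ^ n + (((b:ℝ) + w) / 2) / 2 ^ n := by push_cast; ring
    have h2 : ((2 * k' + b : ℕ) : ℝ) / 2 ^ (n+1)
        = (k' : ℝ) / 2 ^ n + ((b:ℝ) / 2) / 2 ^ n := by push_cast; ring
    have hw' : ((b:ℝ) + w) / 2 ∈ Set.Icc (0:ℝ) 1 := ⟨by linarith, by linarith⟩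
    have hwb : (b:ℝ) / 2 ∈ Set.Icc (0:ℝ) 1 := ⟨by linarith, by linarith⟩
    have t1 : takagi (((b:ℝ) + w) / 2) = distNearestInt (((b:ℝ) + w) / 2) + takagi w / 2 := by
      rw [takagi_functional]
      have : 2 * (((b:ℝ) + w) / 2) = w + ((b : ℤ) : ℝ) := by push_cast; ring
      rw [this, takagi_int_add]
    have t2 : takagi ((b:ℝ) / 2) = distNearestInt ((b:ℝ) / 2) := by
      rw [takagi_functional]
      have : 2 * ((b:ℝ) / 2) = 0 + ((b : ℤ) : ℝ) := by push_cast; ring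
      rw [this, takagi_int_add, takagi_zero]
      ring
    rw [h1, ih k' hk' _ hw', h2, ih k' hk' _ hwb, t1, t2, hs]
    rcases hb with rfl | rfl
    · rw [show (((0:ℕ):ℝ) + w) / 2 = w / 2 by push_cast; ring,
        show ((0:ℕ):ℝ) / 2 = 0 by push_cast; ring,
        dni_half_le (w/2) (by linarith) (by linarith), dni_zero]
      push_cast
      ring
    · rw [show (((1:ℕ):ℝ) + w) / 2 = (1 + w) / 2 by push_cast; ring,
        show ((1:ℕ):ℝ) / 2 = 1 / 2 by push_cast; ring,
        dni_one_sub ((1 + w)/2) (by linarith) (by linarith),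
        dni_half_le (1/2) (by norm_num) (by norm_num)]
      push_cast
      ring

theorem takagi_self_affine (k n : ℕ) (hk : k < 2 ^ n) (w : ℝ) (hw : w ∈ Set.Icc (0:ℝ) 1) :
    takagi ((k : ℝ) / 2 ^ n + w / 2 ^ n) =
      takagi ((k : ℝ) / 2 ^ n) +
        (1 / 2 ^ n) * (takagi w + ((n : ℝ) - 2 * ((Nat.digits 2 k).sum : ℝ)) * w) :=
  takagi_key n k hk w hw
end

section
/- For x ∈ [0,1] with binary expansion x = 0.b₁b₂b₃…, the Takagi function is given by τ(x) = Σ_{m=1}^∞ ℓ_m(x)/2^m, where ℓ_m(x) = #{i : 1 ≤ i < m, b_i ≠ b_m}. -/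
open Finset

/- ### Auxiliary lemmas -/

lemma distNI_bdd (t : ℝ) : BddBelow (Set.range fun n : ℤ => |t - (n : ℝ)|) :=
  ⟨0, by rintro r ⟨n, rfl⟩; exact abs_nonneg _⟩

lemma distNI_add_int (t : ℝ) (k : ℤ) : distNearestInt (t + k) = distNearestInt t := by
  unfold distNearestInt
  rw [iInf, iInf]
  congr 1
  ext r
  constructor
  · rintro ⟨n, rfl⟩
    exact ⟨n - k, by push_cast; ring_nf⟩
  · rintro ⟨n, rfl⟩
    exact ⟨n + k, by push_cast; ring_nf⟩

lemma distNI_le_half {y : ℝ} (h0 : 0 ≤ y) (h1 : y ≤ 1 / 2) : distNearestInt y = y := by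
  unfold distNearestInt
  apply le_antisymm
  · calc ⨅ n : ℤ, |y - (n : ℝ)| ≤ |y - ((0 : ℤ) : ℝ)| := ciInf_le (distNI_bdd y) 0
      _ = y := by simp [abs_of_nonneg h0]
  · apply le_ciInf
    intro n
    rcases le_or_gt (n : ℝ) 0 with hn | hn
    · have := le_abs_self (y - (n : ℝ)); linarith
    · have hn1 : (1 : ℝ) ≤ (n : ℝ) := by
        exact_mod_cast Int.cast_pos.mp hn
      have := neg_abs_le (y - (n : ℝ)); linarith

lemma distNI_ge_half {y : ℝ} (h0 : 1 / 2 ≤ y) (h1 : y ≤ 1) : distNearestInt y = 1 - y := by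
  unfold distNearestInt
  apply le_antisymm
  · calc ⨅ n : ℤ, |y - (n : ℝ)| ≤ |y - ((1 : ℤ) : ℝ)| := ciInf_le (distNI_bdd y) 1
      _ = 1 - y := by rw [abs_of_nonpos (by push_cast; linarith)]; push_cast; ring
  · apply le_ciInf
    intro n
    rcases le_or_gt (n : ℝ) 0 with hn | hn
    · have := le_abs_self (y - (n : ℝ)); linarith
    · have hn1 : (1 : ℝ) ≤ (n : ℝ) := by
        exact_mod_cast Int.cast_pos.mp hn
      have := neg_abs_le (y - (n : ℝ)); linarith

lemma summable_geo_le (f : ℕ → ℝ) (h0 : ∀ k, 0 ≤ f k) (h1 : ∀ k, f k ≤ (1 / 2) ^ k) :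
    Summable f :=
  Summable.of_nonneg_of_le h0 h1
    (summable_geometric_of_lt_one (by norm_num) (by norm_num))

lemma tsum_half_pow : ∑' i : ℕ, (1 : ℝ) / 2 ^ (i + 2) = 1 / 2 := by
  have h : ∀ i : ℕ, (1 : ℝ) / 2 ^ (i + 2) = (1 / 2) ^ i * (1 / 4) := by
    intro i; rw [pow_add, one_div_pow]; ring
  rw [tsum_congr h, tsum_mul_right, tsum_geometric_of_lt_one (by norm_num) (by norm_num)]
  norm_num

set_option maxHeartbeats 1000000 in
theorem takagi_digit_formula (x : ℝ) (hx : x ∈ Set.Icc (0:ℝ) 1)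
    (b : ℕ → ℕ) (hb : IsBinaryExpansion b x) :
    takagi x = ∑' m : ℕ,
      (((Finset.range m).filter (fun i => b i ≠ b m)).card : ℝ) / 2 ^ (m + 1) := by
  obtain ⟨hble, hxeq⟩ := hb
  have hble' : ∀ i, (b i : ℝ) ≤ 1 := fun i => by exact_mod_cast hble i
  set F : ℕ × ℕ → ℝ :=
    fun p => (if p.2 < p.1 ∧ b p.2 ≠ b p.1 then 1 else 0) / 2 ^ (p.1 + 1) with hF
  set e : ℕ × ℕ → ℕ × ℕ := fun p => (p.1 + p.2 + 1, p.1) with he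
  have he_inj : Function.Injective e := by
    rintro ⟨a₁, a₂⟩ ⟨c₁, c₂⟩ h
    simp only [he, Prod.mk.injEq] at h
    exact Prod.ext (by omega) (by omega)
  have hFe : ∀ n k : ℕ,
      F (e (n, k)) = (if b (n + k + 1) ≠ b n then 1 else 0) / 2 ^ (n + k + 2) := by
    intro n k
    simp only [hF, he]
    have h1 : n < n + k + 1 := by omega
    have h2 : n + k + 1 + 1 = n + k + 2 := by omega
    rw [h2]
    by_cases hc : b (n + k + 1) = b n
    · simp [h1, hc]
    · have hc' : b n ≠ b (n + k + 1) := fun h => hc h.symm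
      simp [h1, hc, hc']
  have hF0 : ∀ p ∉ Set.range e, F p = 0 := by
    rintro ⟨m, j⟩ hp
    by_contra h
    apply hp
    have hj : j < m := by
      by_contra hj
      exact h (by simp [hF, hj])
    exact ⟨(j, m - j - 1), by simp only [he]; exact Prod.ext (by omega) rfl⟩
  have hsupp : Function.support F ⊆ Set.range e := fun p hp => by
    by_contra h; exact hp (hF0 p h)
  have hgsum : Summable (F ∘ e) := by
    apply Summable.of_norm_bounded (g := fun p : ℕ × ℕ => (1 / 2 : ℝ) ^ p.1 * (1 / 2) ^ p.2)
      (Summable.mul_of_nonneg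
        (summable_geometric_of_lt_one (by norm_num) (by norm_num))
        (summable_geometric_of_lt_one (by norm_num) (by norm_num))
        (fun n => by positivity) (fun n => by positivity))
    intro p
    rw [Function.comp_apply, hFe p.1 p.2, Real.norm_eq_abs,
      abs_of_nonneg (by positivity)]
    calc (if b (p.1 + p.2 + 1) ≠ b p.1 then (1:ℝ) else 0) / 2 ^ (p.1 + p.2 + 2)
        ≤ 1 / 2 ^ (p.1 + p.2 + 2) := by gcongr; split <;> norm_num
      _ ≤ (1 / 2) ^ p.1 * (1 / 2) ^ p.2 := by
          rw [one_div_pow, one_div_pow, div_mul_div_comm, one_mul]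
          exact one_div_le_one_div_of_le (by positivity)
            (by rw [← pow_add]; exact pow_le_pow_right₀ one_le_two (by omega))
  have hFsum : Summable F := (he_inj.summable_iff hF0).mp hgsum
  have hsum0 : Summable (fun i : ℕ => (b i : ℝ) / 2 ^ (i + 1)) := by
    apply summable_geo_le _ (fun i => by positivity)
    intro i
    calc (b i : ℝ) / 2 ^ (i + 1) ≤ 1 / 2 ^ (i + 1) := by gcongr; exact hble' i
      _ ≤ (1 / 2) ^ i := by
          rw [one_div_pow]
          exact one_div_le_one_div_of_le (by positivity)
            (pow_le_pow_right₀ one_le_two (by omega))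
  have key : ∀ n : ℕ, distNearestInt (2 ^ n * x) / 2 ^ n = ∑' k : ℕ, F (e (n, k)) := by
    intro n
    have hsumt : Summable (fun i : ℕ => (b (i + n) : ℝ) / 2 ^ (i + 1)) := by
      apply summable_geo_le _ (fun i => by positivity)
      intro i
      calc (b (i + n) : ℝ) / 2 ^ (i + 1) ≤ 1 / 2 ^ (i + 1) := by gcongr; exact hble' _
        _ ≤ (1 / 2) ^ i := by
            rw [one_div_pow]
            exact one_div_le_one_div_of_le (by positivity)
              (pow_le_pow_right₀ one_le_two (by omega))
    have htail : (2 : ℝ) ^ n * ∑' i : ℕ, (b (i + n) : ℝ) / 2 ^ (i + n + 1)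
        = ∑' i : ℕ, (b (i + n) : ℝ) / 2 ^ (i + 1) := by
      rw [← Summable.tsum_mul_left ((2:ℝ)^n) ((summable_nat_add_iff n).2 hsum0)]
      refine tsum_congr fun i => ?_
      have h2 : (2 : ℝ) ^ (i + n + 1) = 2 ^ n * 2 ^ (i + 1) := by
        rw [← pow_add]; congr 1; omega
      field_simp
      rw [h2]; ring
    have hhead : (2 : ℝ) ^ n * ∑ i ∈ Finset.range n, (b i : ℝ) / 2 ^ (i + 1)
        = ((∑ i ∈ Finset.range n, (b i : ℤ) * 2 ^ (n - 1 - i) : ℤ) : ℝ) := by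
      push_cast
      rw [Finset.mul_sum]
      refine Finset.sum_congr rfl fun i hi => ?_
      have hi' : i < n := Finset.mem_range.mp hi
      have h2 : (2 : ℝ) ^ n = 2 ^ (n - 1 - i) * 2 ^ (i + 1) := by
        rw [← pow_add]; congr 1; omega
      rw [h2]
      field_simp
    have hxsplit : 2 ^ n * x = (∑' i : ℕ, (b (i + n) : ℝ) / 2 ^ (i + 1))
        + ((∑ i ∈ Finset.range n, (b i : ℤ) * 2 ^ (n - 1 - i) : ℤ) : ℝ) := by
      rw [hxeq, ← Summable.sum_add_tsum_nat_add n hsum0, mul_add, hhead, ← htail, add_comm]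
    have hdisty : distNearestInt (2 ^ n * x)
        = distNearestInt (∑' i : ℕ, (b (i + n) : ℝ) / 2 ^ (i + 1)) := by
      rw [hxsplit]; exact distNI_add_int _ _
    set z : ℝ := ∑' i : ℕ, (b (i + 1 + n) : ℝ) / 2 ^ (i + 2) with hz
    have hsumz : Summable (fun i : ℕ => (b (i + 1 + n) : ℝ) / 2 ^ (i + 2)) :=
      ((summable_nat_add_iff 1).2 hsumt).congr
        (fun i => by rw [show i + 1 + 1 = i + 2 from by omega])
    have hyz : (∑' i : ℕ, (b (i + n) : ℝ) / 2 ^ (i + 1)) = (b n : ℝ) / 2 + z := by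
      have h := (Summable.sum_add_tsum_nat_add 1 hsumt).symm
      simp only [Finset.sum_range_one, zero_add, pow_one] at h
      rw [h]
    have hz0 : 0 ≤ z := tsum_nonneg (fun i => by positivity)
    have hgeo : Summable (fun i : ℕ => (1:ℝ) / 2 ^ (i + 2)) := by
      apply summable_geo_le _ (fun i => by positivity)
      intro i
      rw [one_div_pow]
      exact one_div_le_one_div_of_le (by positivity)
        (pow_le_pow_right₀ one_le_two (by omega))
    have hz12 : z ≤ 1 / 2 := by
      calc z ≤ ∑' i : ℕ, (1 : ℝ) / 2 ^ (i + 2) := by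
            apply Summable.tsum_le_tsum _ hsumz hgeo
            intro i; gcongr; exact hble' _
        _ = 1 / 2 := tsum_half_pow
    have hdistz : distNearestInt (∑' i : ℕ, (b (i + n) : ℝ) / 2 ^ (i + 1))
        = ∑' i : ℕ, (if b (i + 1 + n) ≠ b n then (1:ℝ) else 0) / 2 ^ (i + 2) := by
      rcases Nat.le_one_iff_eq_zero_or_eq_one.mp (hble n) with hbn | hbn
      · have hy' : (∑' i : ℕ, (b (i + n) : ℝ) / 2 ^ (i + 1)) = z := by
          rw [hyz, hbn]; norm_num
        rw [hy', distNI_le_half hz0 hz12, hz]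
        refine tsum_congr fun i => ?_
        rcases Nat.le_one_iff_eq_zero_or_eq_one.mp (hble (i + 1 + n)) with h | h <;>
          simp [h, hbn]
      · have hy' : (∑' i : ℕ, (b (i + n) : ℝ) / 2 ^ (i + 1)) = 1 / 2 + z := by
          rw [hyz, hbn]; norm_num
        rw [distNI_ge_half (by rw [hy']; linarith) (by rw [hy']; linarith), hy']
        calc 1 - (1 / 2 + z) = 1 / 2 - z := by ring
          _ = ∑' i : ℕ, ((1:ℝ) / 2 ^ (i + 2) - (b (i + 1 + n) : ℝ) / 2 ^ (i + 2)) := by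
              rw [Summable.tsum_sub hgeo hsumz, tsum_half_pow]
          _ = ∑' i : ℕ, (if b (i + 1 + n) ≠ b n then (1:ℝ) else 0) / 2 ^ (i + 2) := by
              refine tsum_congr fun i => ?_
              rcases Nat.le_one_iff_eq_zero_or_eq_one.mp (hble (i + 1 + n)) with h | h <;>
                simp [h, hbn]
    rw [hdisty, hdistz, ← tsum_div_const]
    refine tsum_congr fun k => ?_
    rw [hFe n k]
    have hidx : k + 1 + n = n + k + 1 := by omega
    rw [hidx, div_div, ← pow_add]
    congr 2
    omega
  calc takagi x = ∑' n : ℕ, ∑' k : ℕ, F (e (n, k)) := tsum_congr key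
    _ = ∑' p : ℕ × ℕ, F (e p) :=
        (Summable.tsum_prod' hgsum (fun n =>
          hgsum.comp_injective (i := fun k => (n, k))
            (fun a c h => by simpa using h))).symm
    _ = ∑' p : ℕ × ℕ, F p := he_inj.tsum_eq hsupp
    _ = ∑' m : ℕ, ∑' j : ℕ, F (m, j) :=
        Summable.tsum_prod' hFsum (fun m =>
          hFsum.comp_injective (i := fun j => (m, j))
            (fun a c h => by simpa using h))
    _ = ∑' m : ℕ, (((Finset.range m).filter (fun i => b i ≠ b m)).card : ℝ) / 2 ^ (m + 1) := by
        refine tsum_congr fun m => ?_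
        calc ∑' j : ℕ, F (m, j)
            = ∑ j ∈ Finset.range m, F (m, j) := by
              refine tsum_eq_sum fun j hj => ?_
              rw [Finset.mem_range] at hj
              simp [hF, hj]
          _ = ∑ j ∈ Finset.range m, (if b j ≠ b m then (1:ℝ) else 0) / 2 ^ (m + 1) := by
              refine Finset.sum_congr rfl fun j hj => ?_
              rw [Finset.mem_range] at hj
              simp [hF, hj]
          _ = (∑ j ∈ Finset.range m, if b j ≠ b m then (1:ℝ) else 0) / 2 ^ (m + 1) := by
              rw [Finset.sum_div]
          _ = (((Finset.range m).filter (fun i => b i ≠ b m)).card : ℝ) / 2 ^ (m + 1) := by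
              rw [Finset.sum_boole]
end

section
/- For x ∈ [0,1] with binary expansion x = 0.b₁b₂b₃…, the Takagi function satisfies τ(x) = 1/2 − (1/4)·Σ_{m=0}^∞ (−1)^{b_{m+1}} D_m(x)/2^m, where D_m(x) = m − 2(b₁+⋯+b_m). -/
open Finset

set_option linter.unusedSectionVars false
set_option linter.unusedTactic false
set_option maxHeartbeats 1000000


lemma distNearestInt_eq_min_fract (t : ℝ) :
    distNearestInt t = min (Int.fract t) (1 - Int.fract t) := by
  rw [← abs_sub_round_eq_min]
  refine le_antisymm (ciInf_le ⟨0, ?_⟩ (round t)) (le_ciInf fun z => round_le t z)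
  rintro r ⟨n, rfl⟩
  positivity

lemma distNearestInt_intCast_add (N : ℤ) (y : ℝ) :
    distNearestInt ((N : ℝ) + y) = distNearestInt y := by
  rw [distNearestInt_eq_min_fract, distNearestInt_eq_min_fract, Int.fract_intCast_add]

lemma distNearestInt_of_unit {y : ℝ} (h0 : 0 ≤ y) (h1 : y ≤ 1) :
    distNearestInt y = min y (1 - y) := by
  rcases eq_or_lt_of_le h1 with h | h
  · rw [distNearestInt_eq_min_fract, h, Int.fract_one]
    norm_num
  · rw [distNearestInt_eq_min_fract, Int.fract_eq_self.2 ⟨h0, h⟩]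

lemma tsum_one_div_two_pow_add (m : ℕ) : ∑' k : ℕ, (1:ℝ)/2^(k+m) = 2/2^m := by
  have h : ∀ k : ℕ, (1:ℝ)/2^(k+m) = (1/2)^k * (1/2)^m := fun k => by
    rw [← pow_add, div_pow, one_pow]
  rw [tsum_congr h, tsum_mul_right, tsum_geometric_two, div_pow, one_pow]
  ring

lemma summable_one_div_pow_add (m : ℕ) : Summable (fun k : ℕ => (1:ℝ)/2^(k+m)) := by
  refine Summable.of_nonneg_of_le (fun k => by positivity) (fun k => ?_)
    ((summable_geometric_two).mul_right ((1/2)^m))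
  rw [← pow_add, div_pow, one_pow]

section
variable (b : ℕ → ℕ)

noncomputable def tailSum (n m : ℕ) : ℝ := ∑' k : ℕ, (b (n + k) : ℝ) / 2 ^ (k + m + 1)

/-- digit xor -/
def xorDig (n i : ℕ) : ℕ := if b n = b i then 0 else 1

variable (hb1 : ∀ i, b i ≤ 1)
include hb1

lemma digit01 (i : ℕ) : b i = 0 ∨ b i = 1 := by
  have := hb1 i; omega

lemma tail_term_le (n m k : ℕ) : (b (n + k) : ℝ) / 2 ^ (k + m + 1) ≤ (1:ℝ)/2^(k+m+1) := by
  gcongr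
  exact_mod_cast hb1 _

lemma summable_tail (n m : ℕ) : Summable (fun k : ℕ => (b (n + k) : ℝ) / 2 ^ (k + m + 1)) := by
  refine Summable.of_nonneg_of_le (fun k => by positivity) (fun k => ?_)
    ((summable_geometric_two).mul_right ((1/2)^(m+1)))
  calc (b (n + k) : ℝ) / 2 ^ (k + m + 1) ≤ (1:ℝ)/2^(k+m+1) := tail_term_le b hb1 n m k
    _ = (1/2)^k * (1/2)^(m+1) := by
        rw [← pow_add, show k+(m+1) = k+m+1 by omega, div_pow, one_pow]

lemma tailSum_nonneg (n m : ℕ) : 0 ≤ tailSum b n m :=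
  tsum_nonneg fun k => by positivity

lemma tailSum_le (n m : ℕ) : tailSum b n m ≤ 2/2^(m+1) := by
  rw [← tsum_one_div_two_pow_add (m+1)]
  refine Summable.tsum_le_tsum (fun k => ?_) (summable_tail b hb1 n m) (summable_one_div_pow_add (m+1))
  calc (b (n + k) : ℝ) / 2 ^ (k + m + 1) ≤ (1:ℝ)/2^(k+m+1) := tail_term_le b hb1 n m k
    _ = 1/2^(k+(m+1)) := by ring_nf

lemma tailSum_split (n : ℕ) : tailSum b n 0 = (b n : ℝ)/2 + tailSum b (n+1) 1 := by
  unfold tailSum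
  rw [Summable.tsum_eq_zero_add (summable_tail b hb1 n 0)]
  congr 1
  · norm_num
  · exact tsum_congr fun k => by rw [show n + (k+1) = n + 1 + k by omega]

/-- Claim A: `2^n x` decomposes as integer plus `tailSum b n 0`. -/
lemma pow_mul_expansion (x : ℝ) (hx : x = ∑' i : ℕ, (b i : ℝ) / 2 ^ (i + 1)) (n : ℕ) :
    (2:ℝ) ^ n * x = ((∑ i ∈ range n, b i * 2 ^ (n - 1 - i) : ℕ) : ℝ) + tailSum b n 0 := by
  have hsum : Summable (fun i : ℕ => (b i : ℝ) / 2 ^ (i + 1)) := by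
    have := summable_tail b hb1 0 0
    simpa using this
  have key := Summable.sum_add_tsum_nat_add (f := fun i => (2:ℝ)^n * ((b i : ℝ) / 2 ^ (i + 1))) n
    (hsum.mul_left _)
  rw [hx, ← tsum_mul_left, ← key]
  congr 1
  · rw [Nat.cast_sum]
    refine Finset.sum_congr rfl fun i hi => ?_
    have hi' : i < n := Finset.mem_range.1 hi
    have h2 : (2:ℝ)^(n-1-i) * 2^(i+1) = 2^n := by
      rw [← pow_add]
      congr 1
      omega
    push_cast
    field_simp
    rw [← h2]
    ring
  · refine tsum_congr fun k => ?_
    have h2 : (2:ℝ)^(k+n+1) = 2^n * 2^(k+0+1) := by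
      rw [← pow_add]
      congr 1
      omega
    rw [show k + n = n + k by omega]
    rw [show n + k = n + k from rfl]
    field_simp [h2]
    ring

/-- Claim B -/
lemma dist_pow_mul (x : ℝ) (hx : x = ∑' i : ℕ, (b i : ℝ) / 2 ^ (i + 1)) (n : ℕ) :
    distNearestInt ((2:ℝ) ^ n * x)
      = if b n = 0 then tailSum b (n+1) 1 else 1/2 - tailSum b (n+1) 1 := by
  have ht0 := tailSum_nonneg b hb1 (n+1) 1
  have ht1 : tailSum b (n+1) 1 ≤ 1/2 := by
    have := tailSum_le b hb1 (n+1) 1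
    norm_num at this
    linarith
  have hy : tailSum b n 0 = (b n : ℝ)/2 + tailSum b (n+1) 1 := tailSum_split b hb1 n
  have hy0 : 0 ≤ tailSum b n 0 := tailSum_nonneg b hb1 n 0
  have hy1 : tailSum b n 0 ≤ 1 := by
    have := tailSum_le b hb1 n 0
    norm_num at this
    linarith
  rw [pow_mul_expansion b hb1 x hx n]
  rw [show (((∑ i ∈ range n, b i * 2 ^ (n - 1 - i) : ℕ)) : ℝ)
      = (((∑ i ∈ range n, b i * 2 ^ (n - 1 - i) : ℕ) : ℤ) : ℝ) by push_cast; ring]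
  rw [distNearestInt_intCast_add, distNearestInt_of_unit hy0 hy1]
  rcases digit01 b hb1 n with h | h
  · rw [if_pos h]
    rw [hy, h]
    push_cast
    rw [min_eq_left (by linarith)]
    ring
  · rw [if_neg (by omega)]
    rw [hy, h]
    push_cast
    rw [min_eq_right (by linarith)]
    ring

lemma xorDig_le_one (n i : ℕ) : xorDig b n i ≤ 1 := by
  unfold xorDig
  split <;> omega

/-- Claim C/D: the distance as a series in the xor digits. -/
lemma dist_pow_mul_tsum (x : ℝ) (hx : x = ∑' i : ℕ, (b i : ℝ) / 2 ^ (i + 1)) (n : ℕ) :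
    distNearestInt ((2:ℝ) ^ n * x)
      = ∑' k : ℕ, (xorDig b n (n+1+k) : ℝ) / 2 ^ (k+2) := by
  rw [dist_pow_mul b hb1 x hx n]
  rcases digit01 b hb1 n with h | h
  · rw [if_pos h]
    refine (tsum_congr fun k => ?_).symm
    have hc : xorDig b n (n+1+k) = b (n+1+k) := by
      unfold xorDig
      rcases digit01 b hb1 (n+1+k) with h' | h' <;> simp [h, h']
    rw [hc]
  · rw [if_neg (by omega)]
    have hgeo : ∑' k : ℕ, (1:ℝ)/2^(k+2) = 1/2 := by
      rw [tsum_one_div_two_pow_add 2]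
      norm_num
    have hsub : ∑' k : ℕ, ((1:ℝ)/2^(k+2) - (b (n+1+k) : ℝ)/2^(k+2))
        = 1/2 - tailSum b (n+1) 1 := by
      rw [Summable.tsum_sub (summable_one_div_pow_add 2) (summable_tail b hb1 (n+1) 1), hgeo]
      rfl
    rw [← hsub]
    refine tsum_congr fun k => ?_
    have hc : (xorDig b n (n+1+k) : ℝ) = 1 - (b (n+1+k) : ℝ) := by
      unfold xorDig
      rcases digit01 b hb1 (n+1+k) with h' | h' <;> simp [h, h']
    rw [hc]
    ring

lemma dist_pow_mul_div (x : ℝ) (hx : x = ∑' i : ℕ, (b i : ℝ) / 2 ^ (i + 1)) (n : ℕ) :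
    distNearestInt ((2:ℝ) ^ n * x) / 2 ^ n
      = ∑' k : ℕ, (xorDig b n (n+1+k) : ℝ) / 2 ^ (n+k+2) := by
  rw [dist_pow_mul_tsum b hb1 x hx n, ← tsum_div_const]
  refine tsum_congr fun k => ?_
  rw [div_div, ← pow_add]
  congr 2
  omega

lemma summable_F : Summable (fun p : ℕ × ℕ => (xorDig b p.1 (p.1+1+p.2) : ℝ) / 2 ^ (p.1+p.2+2)) := by
  rw [summable_prod_of_nonneg (fun p => by positivity)]
  constructor
  · intro n
    refine Summable.of_nonneg_of_le (fun k => by positivity) (fun k => ?_)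
      (summable_one_div_pow_add (n+2))
    calc (xorDig b n (n+1+k):ℝ)/2^(n+k+2) ≤ 1/2^(n+k+2) := by
          gcongr
          exact_mod_cast xorDig_le_one b hb1 n (n+1+k)
      _ = 1/2^(k+(n+2)) := by rw [show k+(n+2) = n+k+2 by omega]
  · refine Summable.of_nonneg_of_le (f := fun n : ℕ => (2:ℝ)/2^(n+2))
      (fun n => tsum_nonneg fun k => by positivity) (fun n => ?_) ?_
    · calc ∑' k : ℕ, (xorDig b n (n+1+k):ℝ)/2^(n+k+2)
          ≤ ∑' k : ℕ, (1:ℝ)/2^(k+(n+2)) := by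
            refine Summable.tsum_le_tsum (fun k => ?_) ?_ (summable_one_div_pow_add (n+2))
            · rw [show k+(n+2) = n+k+2 by omega]
              gcongr
              exact_mod_cast xorDig_le_one b hb1 n (n+1+k)
            · refine Summable.of_nonneg_of_le (fun k => by positivity) (fun k => ?_)
                (summable_one_div_pow_add (n+2))
              rw [show k+(n+2) = n+k+2 by omega]
              gcongr
              exact_mod_cast xorDig_le_one b hb1 n (n+1+k)
        _ = 2/2^(n+2) := tsum_one_div_two_pow_add (n+2)
    · refine Summable.congr (f := fun n : ℕ => (1:ℝ)/2^(n+1)) (summable_one_div_pow_add 1)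
        (fun n => ?_)
      rw [show n+2 = n+1+1 by omega, pow_succ]
      ring

lemma tsum_F_eq :
    ∑' p : ℕ × ℕ, (xorDig b p.1 (p.1+1+p.2) : ℝ) / 2 ^ (p.1+p.2+2)
      = ∑' i : ℕ, (∑ n ∈ range i, (xorDig b n i : ℝ)) / 2 ^ (i+1) := by
  set G : ℕ × ℕ → ℝ := fun q => if q.2 < q.1 then (xorDig b q.2 q.1 : ℝ)/2^(q.1+1) else 0
    with hGdef
  set ι : ℕ × ℕ → ℕ × ℕ := fun p => (p.1+1+p.2, p.1) with hιdef
  have hι : Function.Injective ι := by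
    intro p q h
    simp only [hιdef, Prod.mk.injEq] at h
    obtain ⟨h1, h2⟩ := h
    exact Prod.ext (by omega) (by omega)
  have hG0 : ∀ q ∉ Set.range ι, G q = 0 := by
    intro q hq
    rcases lt_or_ge q.2 q.1 with h | h
    · exact absurd ⟨(q.2, q.1 - q.2 - 1), Prod.ext (by simp [hιdef]; omega) (by simp [hιdef])⟩ hq
    · simp only [hGdef]
      rw [if_neg (by omega)]
  have hGι : ∀ p : ℕ × ℕ, G (ι p) = (xorDig b p.1 (p.1+1+p.2) : ℝ) / 2 ^ (p.1+p.2+2) := by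
    intro p
    simp only [hGdef, hιdef]
    rw [if_pos (by omega)]
    rw [show p.1+1+p.2+1 = p.1+p.2+2 by omega]
  have hGsum : Summable G := by
    rw [← hι.summable_iff hG0]
    exact Summable.congr (summable_F b hb1) (fun p => (hGι p).symm)
  calc ∑' p : ℕ × ℕ, (xorDig b p.1 (p.1+1+p.2) : ℝ) / 2 ^ (p.1+p.2+2)
      = ∑' p : ℕ × ℕ, G (ι p) := tsum_congr fun p => (hGι p).symm
    _ = ∑' q : ℕ × ℕ, G q := hι.tsum_eq (Function.support_subset_iff'.2 hG0)
    _ = ∑' i : ℕ, ∑' n : ℕ, G (i, n) := Summable.tsum_prod' hGsum hGsum.prod_factor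
    _ = ∑' i : ℕ, (∑ n ∈ range i, (xorDig b n i : ℝ)) / 2 ^ (i+1) := by
        refine tsum_congr fun i => ?_
        rw [tsum_eq_sum (s := range i) (fun n hn => by
          simp only [hGdef]
          rw [if_neg (by simp at hn; omega)])]
        rw [Finset.sum_div]
        refine Finset.sum_congr rfl fun n hn => ?_
        simp only [hGdef]
        rw [if_pos (Finset.mem_range.1 hn)]

lemma abs_defD_le (i : ℕ) : |(defD b i : ℝ)| ≤ (i : ℝ) := by
  have key : |defD b i| ≤ (i : ℤ) := by
    have h1 : 0 ≤ ∑ n ∈ range i, (b n : ℤ) := Finset.sum_nonneg fun n _ => by positivity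
    have h2 : ∑ n ∈ range i, (b n : ℤ) ≤ i := by
      calc ∑ n ∈ range i, (b n : ℤ) ≤ ∑ _n ∈ range i, (1:ℤ) :=
            Finset.sum_le_sum fun n _ => by exact_mod_cast hb1 n
        _ = i := by simp
    simp only [defD]
    rw [abs_le]
    omega
  calc |(defD b i : ℝ)| = ((|defD b i| : ℤ) : ℝ) := (Int.cast_abs).symm
    _ ≤ (i : ℝ) := by exact_mod_cast key

lemma sum_xorDig (i : ℕ) :
    (∑ n ∈ range i, (xorDig b n i : ℝ)) * 2
      = (i:ℝ) - (-1:ℝ)^(b i) * ((defD b i : ℤ) : ℝ) := by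
  have hcast : ((defD b i : ℤ) : ℝ)
      = (i:ℝ) - 2 * ∑ n ∈ range i, (b n : ℝ) := by simp only [defD]; push_cast; ring
  rcases digit01 b hb1 i with h | h
  · have hc : ∀ n ∈ range i, (xorDig b n i : ℝ) = (b n : ℝ) := fun n _ => by
      rcases digit01 b hb1 n with h' | h' <;> simp [xorDig, h, h']
    rw [Finset.sum_congr rfl hc, h, hcast]
    push_cast
    ring
  · have hc : ∀ n ∈ range i, (xorDig b n i : ℝ) = 1 - (b n : ℝ) := fun n _ => by
      rcases digit01 b hb1 n with h' | h' <;> simp [xorDig, h, h']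
    rw [Finset.sum_congr rfl hc, Finset.sum_sub_distrib, Finset.sum_const, card_range, h, hcast]
    push_cast
    ring
end

theorem takagi_deficient_digit_formula (x : ℝ) (hx : x ∈ Set.Icc (0:ℝ) 1)
    (b : ℕ → ℕ) (hb : IsBinaryExpansion b x) :
    takagi x = 1 / 2 -
      (1 / 4) * ∑' m : ℕ, ((-1 : ℝ) ^ (b m) * ((defD b m : ℝ))) / 2 ^ m := by
  obtain ⟨hb1, hx2⟩ := hb
  have hA : Summable (fun i : ℕ => (i:ℝ)/2^(i+2)) := by
    refine Summable.congr ((hasSum_coe_mul_geometric_of_norm_lt_one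
      (r := (1:ℝ)/2) (by rw [Real.norm_eq_abs, abs_of_nonneg]; norm_num; norm_num)).summable.mul_right (1/4))
      (fun i => ?_)
    rw [div_pow, one_pow, show (2:ℝ)^(i+2) = 2^i*4 by rw [pow_add]; norm_num]
    ring
  have hB : Summable (fun i : ℕ => ((-1:ℝ)^(b i) * (defD b i : ℝ))/2^(i+2)) := by
    refine Summable.of_norm (Summable.of_nonneg_of_le (fun i => norm_nonneg _)
      (fun i => ?_) hA)
    rw [Real.norm_eq_abs, abs_div, abs_of_pos (by positivity : (0:ℝ) < 2^(i+2)),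
      abs_mul, abs_pow, abs_neg, abs_one, one_pow, one_mul]
    gcongr
    exact abs_defD_le b hb1 i
  have step1 : takagi x
      = ∑' p : ℕ × ℕ, (xorDig b p.1 (p.1+1+p.2) : ℝ) / 2 ^ (p.1+p.2+2) := by
    unfold takagi
    rw [tsum_congr (fun n => dist_pow_mul_div b hb1 x hx2 n)]
    exact (Summable.tsum_prod' (summable_F b hb1) (summable_F b hb1).prod_factor).symm
  rw [step1, tsum_F_eq b hb1]
  have step2 : ∀ i : ℕ, (∑ n ∈ range i, (xorDig b n i : ℝ))/2^(i+1)
      = (i:ℝ)/2^(i+2) - ((-1:ℝ)^(b i) * (defD b i : ℝ))/2^(i+2) := by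
    intro i
    have h := sum_xorDig b hb1 i
    have h2 : (∑ n ∈ range i, (xorDig b n i : ℝ))/2^(i+1)
        = ((∑ n ∈ range i, (xorDig b n i : ℝ)) * 2)/2^(i+2) := by
      rw [show (2:ℝ)^(i+2) = 2^(i+1)*2 by rw [pow_succ]]
      ring
    rw [h2, h]
    push_cast
    ring
  rw [tsum_congr step2, Summable.tsum_sub hA hB]
  have hAval : ∑' i : ℕ, (i:ℝ)/2^(i+2) = 1/2 := by
    have hc : ∀ i : ℕ, (i:ℝ)/2^(i+2) = (i:ℝ)*(1/2)^i*(1/4) := fun i => by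
      rw [div_pow, one_pow, show (2:ℝ)^(i+2) = 2^i*4 by rw [pow_add]; norm_num]
      ring
    rw [tsum_congr hc, tsum_mul_right,
      tsum_coe_mul_geometric_of_norm_lt_one (by rw [Real.norm_eq_abs, abs_of_nonneg]; norm_num; norm_num : ‖(1/2:ℝ)‖ < 1)]
    norm_num
  have hBval : ∑' i : ℕ, ((-1:ℝ)^(b i) * (defD b i : ℝ))/2^(i+2)
      = (1/4) * ∑' m : ℕ, ((-1:ℝ)^(b m) * (defD b m : ℝ))/2^m := by
    have hc : ∀ i : ℕ, ((-1:ℝ)^(b i) * (defD b i : ℝ))/2^(i+2)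
        = (((-1:ℝ)^(b i) * (defD b i : ℝ))/2^i) * (1/4) := fun i => by
      rw [show (2:ℝ)^(i+2) = 2^i*4 by rw [pow_add]; norm_num]
      ring
    rw [tsum_congr hc, tsum_mul_right]
    ring
  rw [hAval, hBval]
end

section
/- The deficient digit set Ω^L = {x ∈ [0,1] : x has a binary expansion 0.b₁b₂… with j − 2(b₁+⋯+b_j) ≥ 0 for all j ≥ 1} has Lebesgue measure zero. -/
open Finset

namespace OmegaLAux

/-- The `i`-th binary digit of `m`. -/
def dig (m i : ℕ) : ℕ := m / 2 ^ i % 2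

/-- Number of ones among the first `j` binary digits of `m`. -/
def Sm (m j : ℕ) : ℕ := ∑ i ∈ Finset.range j, dig m i

lemma dig_le_one (m i : ℕ) : dig m i ≤ 1 :=
  Nat.lt_succ_iff.mp (Nat.mod_lt _ (by norm_num))

lemma dig_add_high (r n c : ℕ) {i : ℕ} (hi : i < n) :
    dig (r + 2 ^ n * c) i = dig r i := by
  obtain ⟨d, rfl⟩ : ∃ d, n = i + 1 + d := ⟨n - i - 1, by omega⟩
  unfold dig
  have h : 2 ^ (i + 1 + d) * c = 2 ^ i * (2 * (2 ^ d * c)) := by ring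
  rw [h, Nat.add_mul_div_left _ _ (pow_pos two_pos i), Nat.add_mul_mod_self_left]

lemma dig_of_lt {r n : ℕ} (hr : r < 2 ^ n) : dig r n = 0 := by
  unfold dig
  rw [Nat.div_eq_of_lt hr]

lemma dig_high {r c : ℕ} (n : ℕ) (hr : r < 2 ^ n) (hc : c ≤ 1) :
    dig (r + 2 ^ n * c) n = c := by
  unfold dig
  rw [Nat.add_mul_div_left _ _ (pow_pos two_pos n), Nat.div_eq_of_lt hr, Nat.zero_add,
    Nat.mod_eq_of_lt (by omega)]

lemma Sm_succ (m n : ℕ) : Sm m (n + 1) = Sm m n + dig m n := by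
  unfold Sm; rw [Finset.sum_range_succ]

lemma Sm_add_high (r n c : ℕ) {j : ℕ} (hj : j ≤ n) :
    Sm (r + 2 ^ n * c) j = Sm r j := by
  unfold Sm
  exact Finset.sum_congr rfl fun i hi => dig_add_high r n c (lt_of_lt_of_le (mem_range.mp hi) hj)

lemma Sm_succ_high {r c : ℕ} (n : ℕ) (hr : r < 2 ^ n) (hc : c ≤ 1) :
    Sm (r + 2 ^ n * c) (n + 1) = Sm r n + c := by
  rw [Sm_succ, Sm_add_high r n c le_rfl, dig_high n hr hc]

/-- Numbers `< 2^n` whose binary-digit walk stays deficient up to time `n`. -/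
def Gset (n : ℕ) : Finset ℕ :=
  (Finset.range (2 ^ n)).filter (fun m => ∀ j, j ≤ n → 2 * Sm m j ≤ j)

/-- Those elements of `Gset n` with exactly `s` ones. -/
def Aset (n s : ℕ) : Finset ℕ := (Gset n).filter (fun m => Sm m n = s)

lemma mem_Gset {n m : ℕ} :
    m ∈ Gset n ↔ m < 2 ^ n ∧ ∀ j, j ≤ n → 2 * Sm m j ≤ j := by
  simp [Gset, Finset.mem_filter, Finset.mem_range]

lemma mem_Aset {n s m : ℕ} :
    m ∈ Aset n s ↔ (m < 2 ^ n ∧ ∀ j, j ≤ n → 2 * Sm m j ≤ j) ∧ Sm m n = s := by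
  simp [Aset, mem_Gset, Finset.mem_filter]

lemma Aset_empty {n s : ℕ} (h : n < 2 * s) : Aset n s = ∅ := by
  ext m
  simp only [mem_Aset, Finset.notMem_empty, iff_false]
  rintro ⟨⟨-, h2⟩, h3⟩
  have := h2 n le_rfl
  omega

lemma Aset_zero_zero : Aset 0 0 = {0} := by
  ext m
  simp only [mem_Aset, Finset.mem_singleton, pow_zero, Nat.lt_one_iff]
  constructor
  · rintro ⟨⟨h, -⟩, -⟩; exact h
  · rintro rfl
    refine ⟨⟨rfl, ?_⟩, ?_⟩
    · intro j hj; interval_cases j; simp [Sm]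
    · simp [Sm]

lemma Aset_mono (n s : ℕ) : Aset n s ⊆ Aset (n + 1) s := by
  intro m hm
  rw [mem_Aset] at hm ⊢
  obtain ⟨⟨h1, h2⟩, h3⟩ := hm
  have hd : dig m n = 0 := dig_of_lt h1
  have hss := Sm_succ m n
  have hS : Sm m (n + 1) = Sm m n := by omega
  have hpow : (2:ℕ) ^ (n + 1) = 2 ^ n * 2 := pow_succ 2 n
  refine ⟨⟨by omega, ?_⟩, by omega⟩
  intro j hj
  rcases Nat.lt_or_ge j (n + 1) with hj' | hj'
  · exact h2 j (by omega)
  · have hjn : j = n + 1 := by omega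
    subst hjn
    have := h2 n le_rfl
    omega

lemma Aset_succ_zero (n : ℕ) : Aset (n + 1) 0 = Aset n 0 := by
  apply Finset.Subset.antisymm
  · intro m hm
    rw [mem_Aset] at hm ⊢
    obtain ⟨⟨h1, h2⟩, h3⟩ := hm
    have hss := Sm_succ m n
    have hS : Sm m n = 0 := by omega
    have hd : dig m n = 0 := by omega
    have hm' : m < 2 ^ n := by
      by_contra hge
      push_neg at hge
      have h2n : (0:ℕ) < 2 ^ n := pow_pos two_pos n
      have hpow : (2:ℕ) ^ (n + 1) = 2 ^ n * 2 := pow_succ 2 n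
      have hlt2 : m / 2 ^ n < 2 := by
        rw [Nat.div_lt_iff_lt_mul h2n]
        omega
      have h1' : 1 ≤ m / 2 ^ n := (Nat.one_le_div_iff h2n).mpr hge
      have hdm : m / 2 ^ n = 1 := by omega
      unfold dig at hd
      rw [hdm] at hd
      omega
    exact ⟨⟨hm', fun j hj => h2 j (by omega)⟩, hS⟩
  · exact Aset_mono n 0

lemma Aset_succ (n t : ℕ) (h : 2 * (t + 1) ≤ n + 1) :
    Aset (n + 1) (t + 1) = Aset n (t + 1) ∪ (Aset n t).image (fun r => r + 2 ^ n) := by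
  apply Finset.Subset.antisymm
  · intro m hm
    rw [mem_Aset] at hm
    obtain ⟨⟨h1, h2⟩, h3⟩ := hm
    rcases Nat.lt_or_ge m (2 ^ n) with hlt | hge
    · apply Finset.mem_union_left
      rw [mem_Aset]
      have hss := Sm_succ m n
      have hd : dig m n = 0 := dig_of_lt hlt
      exact ⟨⟨hlt, fun j hj => h2 j (by omega)⟩, by omega⟩
    · apply Finset.mem_union_right
      rw [Finset.mem_image]
      set r := m - 2 ^ n with hr
      have hm' : m = r + 2 ^ n * 1 := by omega
      have hrlt : r < 2 ^ n := by
        have : (2:ℕ) ^ (n+1) = 2 ^ n * 2 := pow_succ 2 n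
        omega
      refine ⟨r, ?_, by omega⟩
      rw [mem_Aset]
      have hSj : ∀ j, j ≤ n → Sm m j = Sm r j := by
        intro j hj; rw [hm']; exact Sm_add_high r n 1 hj
      have hSn : Sm m (n + 1) = Sm r n + 1 := by
        rw [hm']; exact Sm_succ_high n hrlt le_rfl
      refine ⟨⟨hrlt, ?_⟩, by omega⟩
      intro j hj
      rw [← hSj j hj]
      exact h2 j (by omega)
  · apply Finset.union_subset
    · exact Aset_mono n (t + 1)
    · intro m hm
      rw [Finset.mem_image] at hm
      obtain ⟨r, hr, rfl⟩ := hm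
      rw [mem_Aset] at hr ⊢
      obtain ⟨⟨h1, h2⟩, h3⟩ := hr
      have hSj : ∀ j, j ≤ n → Sm (r + 2 ^ n) j = Sm r j := by
        intro j hj
        have := Sm_add_high r n 1 hj
        simpa using this
      have hSn : Sm (r + 2 ^ n) (n + 1) = Sm r n + 1 := by
        have := Sm_succ_high n h1 (le_refl 1)
        simpa using this
      refine ⟨⟨?_, ?_⟩, by omega⟩
      · have : (2:ℕ) ^ (n+1) = 2 ^ n * 2 := pow_succ 2 n
        omega
      · intro j hj
        rcases Nat.lt_or_ge j (n + 1) with hj' | hj'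
        · rw [hSj j (by omega)]; exact h2 j (by omega)
        · have : j = n + 1 := by omega
          subst this
          omega

lemma Aset_card_succ (n t : ℕ) (h : 2 * (t + 1) ≤ n + 1) :
    (Aset (n + 1) (t + 1)).card = (Aset n (t + 1)).card + (Aset n t).card := by
  rw [Aset_succ n t h, Finset.card_union_of_disjoint, Finset.card_image_of_injective _
    (add_left_injective (2 ^ n))]
  rw [Finset.disjoint_left]
  intro m hm hm'
  rw [mem_Aset] at hm
  rw [Finset.mem_image] at hm'
  obtain ⟨r, -, rfl⟩ := hm'
  have := hm.1.1
  omega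

/-- Integer-indexed binomial coefficient. -/
def J (n : ℕ) (k : ℤ) : ℤ := if 0 ≤ k then (n.choose k.toNat : ℤ) else 0

lemma J_natCast (n t : ℕ) : J n (t : ℤ) = (n.choose t : ℤ) := by simp [J]

lemma J_neg {n : ℕ} {k : ℤ} (h : k < 0) : J n k = 0 := by simp [J, not_le.mpr h]

lemma J_pascal (n : ℕ) {k : ℤ} (hk : 0 ≤ k) : J (n + 1) k = J n k + J n (k - 1) := by
  rcases eq_or_lt_of_le hk with h0 | h1
  · rw [← h0]
    simp [J]
  · obtain ⟨t, rfl⟩ : ∃ t : ℕ, k = (t : ℤ) + 1 := ⟨(k - 1).toNat, by omega⟩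
    have h1 : ((t : ℤ) + 1) = ((t + 1 : ℕ) : ℤ) := by push_cast; ring
    have h2 : ((t : ℤ) + 1 - 1) = ((t : ℕ) : ℤ) := by ring
    rw [h2, h1, J_natCast, J_natCast, J_natCast, Nat.choose_succ_succ']
    push_cast; ring

lemma Aset_card (n : ℕ) : ∀ s : ℕ, 2 * s ≤ n + 1 →
    ((Aset n s).card : ℤ) = J n s - J n ((s : ℤ) - 1) := by
  induction n with
  | zero =>
    intro s hs
    have : s = 0 := by omega
    subst this
    rw [Aset_zero_zero]
    simp [J]
  | succ n ih =>
    intro s hs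
    rcases Nat.eq_zero_or_pos s with rfl | hpos
    · rw [Aset_succ_zero, ih 0 (by omega)]
      simp [J]
    · obtain ⟨t, rfl⟩ : ∃ t, s = t + 1 := ⟨s - 1, by omega⟩
      rcases Nat.lt_or_ge (2 * (t + 1)) (n + 2) with hle | hgt
      · -- 2(t+1) ≤ n+1
        have hle' : 2 * (t + 1) ≤ n + 1 := by omega
        rw [Aset_card_succ n t hle']
        push_cast
        rw [ih (t + 1) (by omega), ih t (by omega)]
        have e1 : J (n + 1) ((t : ℤ) + 1) = J n ((t : ℤ) + 1) + J n ((t : ℤ)) := by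
          have := J_pascal n (k := (t : ℤ) + 1) (by positivity)
          simpa using this
        have e2 : J (n + 1) ((t : ℤ)) = J n ((t : ℤ)) + J n ((t : ℤ) - 1) := by
          exact J_pascal n (k := (t : ℤ)) (by positivity)
        have c1 : (((t + 1 : ℕ)) : ℤ) = (t : ℤ) + 1 := by push_cast; ring
        rw [c1]
        rw [show ((t : ℤ) + 1 - 1) = (t : ℤ) by ring]
        rw [e1, e2]
        ring
      · -- 2(t+1) = n+2, boundary case
        have hn : n + 1 = 2 * t + 1 := by omega
        rw [Aset_empty (by omega)]
        have c1 : (((t + 1 : ℕ)) : ℤ) = (t : ℤ) + 1 := by push_cast; ring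
        simp only [Finset.card_empty, Nat.cast_zero, c1]
        rw [show ((t : ℤ) + 1 - 1) = (t : ℤ) by ring]
        have h1 : ((t : ℤ) + 1) = ((t + 1 : ℕ) : ℤ) := by push_cast; ring
        rw [h1, J_natCast, J_natCast, hn]
        have : (2 * t + 1).choose (t + 1) = (2 * t + 1).choose t := by
          rw [← Nat.choose_symm (by omega)]
          congr 1
          omega
        rw [this]
        ring

lemma Gset_card (n : ℕ) : ((Gset n).card : ℤ) = (n.choose (n / 2) : ℤ) := by
  have hfib : ∀ m ∈ Gset n, Sm m n ∈ Finset.range (n / 2 + 1) := by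
    intro m hm
    rw [mem_Gset] at hm
    have := hm.2 n le_rfl
    rw [Finset.mem_range]
    omega
  rw [Finset.card_eq_sum_card_fiberwise hfib]
  push_cast
  have hterm : ∀ s ∈ Finset.range (n / 2 + 1),
      ((((Gset n).filter (fun m => Sm m n = s)).card : ℤ))
        = (fun i : ℕ => J n ((i : ℤ) - 1)) (s + 1) - (fun i : ℕ => J n ((i : ℤ) - 1)) s := by
    intro s hs
    rw [Finset.mem_range] at hs
    simp only
    have hc : ((s + 1 : ℕ) : ℤ) - 1 = (s : ℤ) := by push_cast; ring
    rw [hc]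
    exact Aset_card n s (by omega)
  rw [Finset.sum_congr rfl hterm, Finset.sum_range_sub (fun i : ℕ => J n ((i : ℤ) - 1))]
  have h1 : ((n / 2 + 1 : ℕ) : ℤ) - 1 = ((n / 2 : ℕ) : ℤ) := by push_cast; ring
  have h0 : ((0 : ℕ) : ℤ) - 1 = (-1 : ℤ) := by norm_num
  rw [h1, J_natCast, h0, J_neg (by norm_num : (-1 : ℤ) < 0)]
  ring


lemma centralBinom_sq_le (m : ℕ) : Nat.centralBinom m ^ 2 * (m + 1) ≤ 16 ^ m := by
  induction m with
  | zero => simp [Nat.centralBinom]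
  | succ m ih =>
    have key := Nat.succ_mul_centralBinom_succ m
    have hcancel : (m + 1) ^ 3 * (Nat.centralBinom (m + 1) ^ 2 * (m + 1 + 1)) ≤
        (m + 1) ^ 3 * 16 ^ (m + 1) := by
      have e : (m + 1) ^ 3 * (Nat.centralBinom (m + 1) ^ 2 * (m + 1 + 1)) =
          ((m + 1) * Nat.centralBinom (m + 1)) ^ 2 * ((m + 2) * (m + 1)) := by ring
      rw [e, key]
      have e2 : (2 * (2 * m + 1) * Nat.centralBinom m) ^ 2 * ((m + 2) * (m + 1)) =
          (4 * ((2 * m + 1) ^ 2 * (m + 2))) * (Nat.centralBinom m ^ 2 * (m + 1)) := by ring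
      rw [e2]
      calc (4 * ((2 * m + 1) ^ 2 * (m + 2))) * (Nat.centralBinom m ^ 2 * (m + 1))
          ≤ (4 * ((2 * m + 1) ^ 2 * (m + 2))) * 16 ^ m := Nat.mul_le_mul_left _ ih
        _ ≤ (16 * (m + 1) ^ 3) * 16 ^ m := Nat.mul_le_mul_right _ (by nlinarith)
        _ = (m + 1) ^ 3 * 16 ^ (m + 1) := by ring
    exact Nat.le_of_mul_le_mul_left hcancel (by positivity)

lemma card_Gset_two_mul (m : ℕ) : (Gset (2 * m)).card = Nat.centralBinom m := by
  have h := Gset_card (2 * m)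
  rw [show 2 * m / 2 = m from by omega] at h
  have : Nat.centralBinom m = (2 * m).choose m := rfl
  rw [this]
  exact_mod_cast h

lemma Msum_lt (b : ℕ → ℕ) (hb : ∀ i, b i ≤ 1) (n : ℕ) :
    ∑ i ∈ Finset.range n, b i * 2 ^ i < 2 ^ n := by
  induction n with
  | zero => simp
  | succ n ih =>
    rw [Finset.sum_range_succ]
    have h1 : b n * 2 ^ n ≤ 1 * 2 ^ n := Nat.mul_le_mul_right _ (hb n)
    have h2 : (2:ℕ) ^ (n + 1) = 2 ^ n * 2 := pow_succ 2 n
    omega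

lemma dig_Msum (b : ℕ → ℕ) (hb : ∀ i, b i ≤ 1) (n : ℕ) :
    ∀ j, j < n → dig (∑ i ∈ Finset.range n, b i * 2 ^ i) j = b j := by
  induction n with
  | zero => intro j hj; omega
  | succ n ih =>
    intro j hj
    rw [Finset.sum_range_succ, show b n * 2 ^ n = 2 ^ n * b n from mul_comm _ _]
    rcases Nat.lt_or_ge j n with h | h
    · rw [dig_add_high _ n (b n) h]
      exact ih j h
    · have hj' : j = n := by omega
      rw [hj']
      exact dig_high n (Msum_lt b hb n) (hb n)

/-- Left endpoint of the dyadic interval of generation `n` attached to `m`. -/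
noncomputable def yv (n m : ℕ) : ℝ := ∑ i ∈ Finset.range n, (dig m i : ℝ) / 2 ^ (i + 1)

lemma summable_b (b : ℕ → ℕ) (hb : ∀ i, b i ≤ 1) :
    Summable (fun i : ℕ => (b i : ℝ) / 2 ^ (i + 1)) := by
  apply Summable.of_nonneg_of_le (fun i => by positivity) (fun i => ?_)
    (summable_geometric_of_lt_one (by norm_num) (by norm_num : (2⁻¹:ℝ) < 1))
  have h1 : (b i : ℝ) ≤ 1 := by exact_mod_cast hb i
  have h2 : (0:ℝ) < (2:ℝ) ^ i := by positivity
  have h3 : (2⁻¹ : ℝ) ^ i = ((2:ℝ) ^ i)⁻¹ := by rw [inv_pow]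
  rw [h3]
  rw [div_le_iff₀ (by positivity)]
  rw [inv_mul_eq_div, le_div_iff₀ (by positivity)]
  calc (b i : ℝ) * 2 ^ i ≤ 1 * 2 ^ i := by gcongr
    _ ≤ 2 ^ (i + 1) := by rw [one_mul, pow_succ]; nlinarith

set_option maxHeartbeats 1000000 in
lemma cover (n : ℕ) :
    OmegaL ⊆ ⋃ m ∈ Gset n, Set.Icc (yv n m) (yv n m + (2⁻¹ : ℝ) ^ n) := by
  intro x hx
  obtain ⟨b, ⟨hb1, hxe⟩, hD⟩ := hx
  set M := ∑ i ∈ Finset.range n, b i * 2 ^ i with hM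
  have hdig : ∀ j, j < n → dig M j = b j := dig_Msum b hb1 n
  have hSm : ∀ j, j ≤ n → Sm M j = ∑ i ∈ Finset.range j, b i := by
    intro j hj
    unfold Sm
    exact Finset.sum_congr rfl fun i hi => hdig i (lt_of_lt_of_le (Finset.mem_range.mp hi) hj)
  have hmem : M ∈ Gset n := by
    rw [mem_Gset]
    refine ⟨Msum_lt b hb1 n, ?_⟩
    intro j hj
    rw [hSm j hj]
    rcases Nat.eq_zero_or_pos j with rfl | hj0
    · simp
    · have hDj := hD j hj0
      unfold defD at hDj
      have hcast : (∑ i ∈ Finset.range j, (b i : ℤ)) = ((∑ i ∈ Finset.range j, b i : ℕ) : ℤ) := by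
        push_cast; rfl
      rw [hcast] at hDj
      omega
  apply Set.mem_biUnion hmem
  have hsum : Summable (fun i : ℕ => (b i : ℝ) / 2 ^ (i + 1)) := summable_b b hb1
  have hsplit := Summable.sum_add_tsum_nat_add (f := fun i : ℕ => (b i : ℝ) / 2 ^ (i + 1)) n hsum
  have hy : yv n M = ∑ i ∈ Finset.range n, (b i : ℝ) / 2 ^ (i + 1) := by
    unfold yv
    exact Finset.sum_congr rfl fun i hi => by rw [hdig i (Finset.mem_range.mp hi)]
  have hshift : Summable (fun i : ℕ => (b (i + n) : ℝ) / 2 ^ (i + n + 1)) := by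
    exact (summable_nat_add_iff n).mpr hsum
  have htail_nonneg : 0 ≤ ∑' i : ℕ, (b (i + n) : ℝ) / 2 ^ (i + n + 1) :=
    tsum_nonneg fun i => by positivity
  have htail_le : (∑' i : ℕ, (b (i + n) : ℝ) / 2 ^ (i + n + 1)) ≤ (2⁻¹ : ℝ) ^ n := by
    have hb' : ∀ i : ℕ, (b (i + n) : ℝ) / 2 ^ (i + n + 1) ≤ (2⁻¹:ℝ) ^ (n + 1) * (2⁻¹:ℝ) ^ i := by
      intro i
      have h1 : (b (i + n) : ℝ) ≤ 1 := by exact_mod_cast hb1 (i + n)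
      have h2 : (2⁻¹:ℝ) ^ (n + 1) * (2⁻¹:ℝ) ^ i = ((2:ℝ) ^ (i + n + 1))⁻¹ := by
        rw [← pow_add, ← inv_pow]
        congr 1
        omega
      rw [h2]
      rw [div_le_iff₀ (by positivity), inv_mul_eq_div, le_div_iff₀ (by positivity)]
      nlinarith [pow_pos (by norm_num : (0:ℝ) < 2) (i + n + 1)]
    calc (∑' i : ℕ, (b (i + n) : ℝ) / 2 ^ (i + n + 1))
        ≤ ∑' i : ℕ, (2⁻¹:ℝ) ^ (n + 1) * (2⁻¹:ℝ) ^ i :=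
          Summable.tsum_le_tsum hb' hshift
            (Summable.mul_left _ (summable_geometric_of_lt_one (by norm_num) (by norm_num)))
      _ = (2⁻¹:ℝ) ^ (n + 1) * (1 - 2⁻¹)⁻¹ := by
          rw [tsum_mul_left, tsum_geometric_of_lt_one (by norm_num) (by norm_num)]
      _ = (2⁻¹:ℝ) ^ n := by
          rw [pow_succ]
          norm_num
          ring
  rw [Set.mem_Icc, hy]
  constructor
  · rw [hxe, ← hsplit]
    linarith
  · rw [hxe, ← hsplit]
    linarith

lemma volume_le (n : ℕ) :
    MeasureTheory.volume OmegaL ≤ ((Gset n).card : ENNReal) * ENNReal.ofReal ((2⁻¹ : ℝ) ^ n) := by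
  calc MeasureTheory.volume OmegaL
      ≤ MeasureTheory.volume (⋃ m ∈ Gset n, Set.Icc (yv n m) (yv n m + (2⁻¹ : ℝ) ^ n)) :=
        MeasureTheory.measure_mono (cover n)
    _ ≤ ∑ m ∈ Gset n, MeasureTheory.volume (Set.Icc (yv n m) (yv n m + (2⁻¹ : ℝ) ^ n)) :=
        MeasureTheory.measure_biUnion_finset_le _ _
    _ = ∑ m ∈ Gset n, ENNReal.ofReal ((2⁻¹ : ℝ) ^ n) := by
        refine Finset.sum_congr rfl fun m hm => ?_
        rw [Real.volume_Icc]
        congr 1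
        ring
    _ = ((Gset n).card : ENNReal) * ENNReal.ofReal ((2⁻¹ : ℝ) ^ n) := by
        rw [Finset.sum_const, nsmul_eq_mul]

end OmegaLAux

theorem omegaL_measure_zero : MeasureTheory.volume OmegaL = 0 := by
  set v := MeasureTheory.volume OmegaL with hv
  have key : ∀ m : ℕ, v * v ≤ ENNReal.ofReal (1 / ((m : ℝ) + 1)) := by
    intro m
    have hCnn : (0:ℝ) ≤ (Nat.centralBinom m : ℝ) := by positivity
    have h1 : v ≤ ENNReal.ofReal ((Nat.centralBinom m : ℝ) * (2⁻¹ : ℝ) ^ (2 * m)) := by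
      have hv2 := OmegaLAux.volume_le (2 * m)
      rw [OmegaLAux.card_Gset_two_mul m] at hv2
      calc v ≤ (Nat.centralBinom m : ENNReal) * ENNReal.ofReal ((2⁻¹ : ℝ) ^ (2 * m)) := hv2
        _ = ENNReal.ofReal ((Nat.centralBinom m : ℝ)) * ENNReal.ofReal ((2⁻¹ : ℝ) ^ (2 * m)) := by
            rw [ENNReal.ofReal_natCast]
        _ = ENNReal.ofReal ((Nat.centralBinom m : ℝ) * (2⁻¹ : ℝ) ^ (2 * m)) :=
            (ENNReal.ofReal_mul hCnn).symm
    have hreal : ((Nat.centralBinom m : ℝ) * (2⁻¹ : ℝ) ^ (2 * m)) *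
        ((Nat.centralBinom m : ℝ) * (2⁻¹ : ℝ) ^ (2 * m)) ≤ 1 / ((m : ℝ) + 1) := by
      have hn := OmegaLAux.centralBinom_sq_le m
      have hR : (Nat.centralBinom m : ℝ) ^ 2 * ((m : ℝ) + 1) ≤ 16 ^ m := by
        exact_mod_cast hn
      have h2 : (2⁻¹ : ℝ) ^ (2 * m) * (2⁻¹ : ℝ) ^ (2 * m) = ((16 : ℝ) ^ m)⁻¹ := by
        rw [← pow_add, inv_pow, show (16:ℝ) = 2 ^ 4 from by norm_num, ← pow_mul]
        congr 1
        ring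
      have h16 : (0:ℝ) < 16 ^ m := by positivity
      have hm1 : (0:ℝ) < (m : ℝ) + 1 := by positivity
      calc ((Nat.centralBinom m : ℝ) * (2⁻¹ : ℝ) ^ (2 * m)) *
          ((Nat.centralBinom m : ℝ) * (2⁻¹ : ℝ) ^ (2 * m))
          = (Nat.centralBinom m : ℝ) ^ 2 * ((2⁻¹ : ℝ) ^ (2 * m) * (2⁻¹ : ℝ) ^ (2 * m)) := by
            ring
        _ = (Nat.centralBinom m : ℝ) ^ 2 / 16 ^ m := by rw [h2, div_eq_mul_inv]
        _ ≤ 1 / ((m : ℝ) + 1) := by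
            rw [div_le_div_iff₀ h16 hm1]
            linarith
    calc v * v ≤ ENNReal.ofReal ((Nat.centralBinom m : ℝ) * (2⁻¹ : ℝ) ^ (2 * m)) *
          ENNReal.ofReal ((Nat.centralBinom m : ℝ) * (2⁻¹ : ℝ) ^ (2 * m)) := mul_le_mul' h1 h1
      _ = ENNReal.ofReal (((Nat.centralBinom m : ℝ) * (2⁻¹ : ℝ) ^ (2 * m)) *
          ((Nat.centralBinom m : ℝ) * (2⁻¹ : ℝ) ^ (2 * m))) :=
            (ENNReal.ofReal_mul (by positivity)).symm
      _ ≤ ENNReal.ofReal (1 / ((m : ℝ) + 1)) := ENNReal.ofReal_le_ofReal hreal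
  have hlim : Filter.Tendsto (fun m : ℕ => ENNReal.ofReal (1 / ((m : ℝ) + 1)))
      Filter.atTop (nhds 0) := by
    have := ENNReal.tendsto_ofReal (tendsto_one_div_add_atTop_nhds_zero_nat)
    simpa using this
  have hvv : v * v ≤ 0 := ge_of_tendsto' hlim key
  have hz : v * v = 0 := le_antisymm hvv zero_le
  exact mul_self_eq_zero.mp hz
end

section
/- The deficient digit set Ω^L = {x ∈ [0,1] : x has a binary expansion with D_j(x) ≥ 0 for all j ≥ 1} is a closed subset of [0,1] contained in [0, 1/3]. -/
open Finset

/-- The value of a 0/1-sequence as a real number in [0,1]. -/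
noncomputable def PhiVal (b : ℕ → Fin 2) : ℝ := ∑' i : ℕ, ((b i : ℕ) : ℝ) / 2 ^ (i + 1)

/-- The closed set of digit sequences with all deficiencies nonnegative. -/
def KSet : Set (ℕ → Fin 2) :=
  {b | ∀ j : ℕ, 1 ≤ j → 2 * ∑ i ∈ Finset.range j, ((b i : ℕ) : ℝ) ≤ (j : ℝ)}

lemma phiVal_cont : Continuous PhiVal := by
  refine continuous_tsum (u := fun i : ℕ => (1/2 : ℝ) ^ i) (f := fun (i : ℕ) (b : ℕ → Fin 2) => ((b i : ℕ) : ℝ) / 2 ^ (i + 1)) ?_ ?_ ?_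
  · intro i
    exact Continuous.div_const
      (Continuous.comp (g := fun v : Fin 2 => ((v : ℕ) : ℝ))
        continuous_of_discreteTopology (continuous_apply i)) _
  · exact summable_geometric_of_lt_one (by norm_num) (by norm_num)
  · intro n x
    rw [Real.norm_eq_abs, abs_of_nonneg (by positivity)]
    have h1 : ((x n : ℕ) : ℝ) ≤ 1 := by
      have := (x n).isLt; exact_mod_cast Nat.lt_succ_iff.mp this
    calc ((x n : ℕ) : ℝ) / 2 ^ (n + 1) ≤ 1 / 2 ^ (n + 1) := by gcongr
      _ ≤ 1 / 2 ^ n := by gcongr <;> norm_num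
      _ = (1/2 : ℝ) ^ n := by rw [one_div_pow]

lemma isClosed_KSet : IsClosed KSet := by
  have : KSet = ⋂ j : ℕ,
      {b : ℕ → Fin 2 | 1 ≤ j → 2 * ∑ i ∈ Finset.range j, ((b i : ℕ) : ℝ) ≤ (j : ℝ)} := by
    ext b; simp [KSet, Set.mem_iInter]
  rw [this]
  refine isClosed_iInter fun j => ?_
  by_cases hj : 1 ≤ j
  · simp only [hj, forall_true_left]
    exact isClosed_le
      (continuous_const.mul (continuous_finset_sum _ fun i _ =>
        Continuous.comp (g := fun v : Fin 2 => ((v : ℕ) : ℝ))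
          continuous_of_discreteTopology (continuous_apply i)))
      continuous_const
  · simp [hj]

lemma omegaL_eq_image : OmegaL = PhiVal '' KSet := by
  ext x
  constructor
  · rintro ⟨b, ⟨hb1, rfl⟩, hD⟩
    refine ⟨fun i => ⟨b i, by have := hb1 i; omega⟩, fun j hj => ?_, ?_⟩
    · have h := hD j hj
      unfold defD at h
      have h2 : 2 * (∑ i ∈ Finset.range j, (b i : ℤ)) ≤ (j : ℤ) := by linarith
      have : (2 : ℝ) * ∑ i ∈ Finset.range j, (b i : ℝ) ≤ (j : ℝ) := by exact_mod_cast h2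
      simpa using this
    · simp [PhiVal]
  · rintro ⟨b, hb, rfl⟩
    refine ⟨fun i => (b i : ℕ), ⟨fun i => ?_, rfl⟩, fun j hj => ?_⟩
    · show (b i : ℕ) ≤ 1
      exact Nat.lt_succ_iff.mp (b i).isLt
    · have h := hb j hj
      have h2 : 2 * (∑ i ∈ Finset.range j, ((b i : ℕ) : ℤ)) ≤ (j : ℤ) := by exact_mod_cast h
      unfold defD
      linarith

lemma defD_nonneg (b : ℕ → ℕ) (hD : ∀ j ≥ 1, 0 ≤ defD b j) (n : ℕ) : 0 ≤ defD b n := by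
  rcases Nat.eq_zero_or_pos n with rfl | hn
  · simp [defD]
  · exact hD n hn

lemma key_bound (b : ℕ → ℕ) (hb : ∀ i, b i ≤ 1) (hD : ∀ j ≥ 1, 0 ≤ defD b j) (n : ℕ) :
    3 * 2 ^ n * (∑ i ∈ Finset.range n, (b i : ℝ) / 2 ^ (i + 1)) + 1 + (defD b n : ℝ)
      ≤ 2 ^ n := by
  induction n with
  | zero => simp [defD]
  | succ n ih =>
    have hd0 : (0 : ℤ) ≤ defD b n := defD_nonneg b hD n
    have hstep : defD b (n + 1) = defD b n + 1 - 2 * (b n : ℤ) := by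
      simp only [defD, Finset.sum_range_succ]
      push_cast
      ring
    have hbn : (b n : ℤ) ≤ defD b n := by
      rcases Nat.le_one_iff_eq_zero_or_eq_one.mp (hb n) with h | h
      · simp [h]; exact hd0
      · have h1 := hD (n + 1) (by omega)
        rw [hstep, h] at h1
        have : (b n : ℤ) = 1 := by exact_mod_cast h
        omega
    have hbn' : ((b n : ℕ) : ℝ) ≤ (defD b n : ℝ) := by exact_mod_cast hbn
    have hDcast : (defD b (n + 1) : ℝ) = (defD b n : ℝ) + 1 - 2 * (b n : ℝ) := by
      rw [hstep]; push_cast; ring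
    rw [Finset.sum_range_succ, hDcast]
    have hne : (2 : ℝ) ^ (n + 1) ≠ 0 := by positivity
    have hexpand : (3 : ℝ) * 2 ^ (n + 1) *
        (∑ i ∈ Finset.range n, (b i : ℝ) / 2 ^ (i + 1) + (b n : ℝ) / 2 ^ (n + 1))
        = 2 * (3 * 2 ^ n * ∑ i ∈ Finset.range n, (b i : ℝ) / 2 ^ (i + 1)) + 3 * (b n : ℝ) := by
      field_simp
      ring
    rw [hexpand, pow_succ]
    linarith

lemma partial_le_third (b : ℕ → ℕ) (hb : ∀ i, b i ≤ 1) (hD : ∀ j ≥ 1, 0 ≤ defD b j) (n : ℕ) :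
    ∑ i ∈ Finset.range n, (b i : ℝ) / 2 ^ (i + 1) ≤ 1 / 3 := by
  have h := key_bound b hb hD n
  have hd : (0 : ℝ) ≤ (defD b n : ℝ) := by exact_mod_cast defD_nonneg b hD n
  have hpow : (0 : ℝ) < 2 ^ n := by positivity
  nlinarith

theorem omegaL_closed_subset : IsClosed OmegaL ∧ OmegaL ⊆ Set.Icc (0:ℝ) (1/3) := by
  constructor
  · rw [omegaL_eq_image]
    exact ((isClosed_KSet.isCompact).image phiVal_cont).isClosed
  · rintro x ⟨b, ⟨hb1, rfl⟩, hD⟩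
    constructor
    · exact tsum_nonneg fun i => by positivity
    · exact Real.tsum_le_of_sum_range_le (fun i => by positivity)
        (partial_le_third b hb1 hD)
end

section
/- The deficient digit set Ω^L is a perfect set: every point of Ω^L is a limit of other points of Ω^L. -/
open Finset

lemma summable_digits {b : ℕ → ℕ} (hb : ∀ i, b i ≤ 1) :
    Summable (fun i : ℕ => (b i : ℝ) / 2 ^ (i + 1)) := by
  apply Summable.of_nonneg_of_le (f := fun i : ℕ => (1/2 : ℝ) ^ i)
    (fun i => by positivity) _ (summable_geometric_of_lt_one (by norm_num) (by norm_num))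
  intro i
  have h1 : (b i : ℝ) ≤ 1 := by exact_mod_cast hb i
  have h2 : (1/2 : ℝ) ^ i * 2 ^ (i + 1) = 2 := by
    rw [pow_succ, ← mul_assoc, ← mul_pow]
    norm_num
  rw [div_le_iff₀ (by positivity)]
  nlinarith [pow_pos (by norm_num : (0:ℝ) < 1/2) i]

lemma digit_term_le {b : ℕ → ℕ} (hb : ∀ i, b i ≤ 1) (i : ℕ) :
    (b i : ℝ) / 2 ^ (i + 1) ≤ (1/2 : ℝ) ^ i := by
  have h1 : (b i : ℝ) ≤ 1 := by exact_mod_cast hb i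
  have h2 : (1/2 : ℝ) ^ i * 2 ^ (i + 1) = 2 := by
    rw [pow_succ, ← mul_assoc, ← mul_pow]
    norm_num
  rw [div_le_iff₀ (by positivity)]
  nlinarith [pow_pos (by norm_num : (0:ℝ) < 1/2) i]

set_option maxHeartbeats 1000000 in
lemma tsum_digits_dist_le {b c : ℕ → ℕ} (hb : ∀ i, b i ≤ 1) (hc : ∀ i, c i ≤ 1)
    (n : ℕ) (hfg : ∀ i < n, b i = c i) :
    |(∑' i : ℕ, (b i : ℝ) / 2 ^ (i + 1)) - ∑' i : ℕ, (c i : ℝ) / 2 ^ (i + 1)| ≤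
      2 * (1/2 : ℝ) ^ n := by
  have hsb := summable_digits hb
  have hsc := summable_digits hc
  set f : ℕ → ℝ := fun i => (b i : ℝ) / 2 ^ (i + 1) - (c i : ℝ) / 2 ^ (i + 1) with hf
  have hs : Summable f := hsb.sub hsc
  have habs : ∀ i, |f i| ≤ (1/2 : ℝ) ^ i := by
    intro i
    have h1 := digit_term_le hb i
    have h2 := digit_term_le hc i
    have h3 : (0:ℝ) ≤ (b i : ℝ) / 2 ^ (i + 1) := by positivity
    have h4 : (0:ℝ) ≤ (c i : ℝ) / 2 ^ (i + 1) := by positivity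
    rw [abs_sub_le_iff]
    constructor <;> linarith
  rw [← Summable.tsum_sub hsb hsc]
  have key : |∑' i, f i| ≤ ∑' i, |f i| := by
    have h := norm_tsum_le_tsum_norm (f := f) (by simpa [Real.norm_eq_abs] using hs.abs)
    simpa [Real.norm_eq_abs] using h
  have hsplit := Summable.sum_add_tsum_nat_add (f := fun i => |f i|) n hs.abs
  have hzero : ∑ i ∈ Finset.range n, |f i| = 0 := by
    apply Finset.sum_eq_zero
    intro i hi
    simp only [Finset.mem_range] at hi
    simp [hf, hfg i hi]
  have htail : Summable (fun i => |f (i + n)|) := (summable_nat_add_iff n).2 hs.abs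
  have hgeo : Summable (fun i : ℕ => (1/2 : ℝ) ^ (i + n)) :=
    (summable_nat_add_iff n).2 (summable_geometric_of_lt_one (by norm_num) (by norm_num))
  have htb : ∑' i : ℕ, |f (i + n)| ≤ ∑' i : ℕ, (1/2 : ℝ) ^ (i + n) :=
    Summable.tsum_le_tsum (fun i => habs (i + n)) htail hgeo
  have hval : ∑' i : ℕ, (1/2 : ℝ) ^ (i + n) = 2 * (1/2 : ℝ) ^ n := by
    have : ∀ i : ℕ, (1/2 : ℝ) ^ (i + n) = (1/2 : ℝ) ^ i * (1/2 : ℝ) ^ n := fun i => pow_add _ _ _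
    rw [tsum_congr this, tsum_mul_right, tsum_geometric_of_lt_one (by norm_num) (by norm_num)]
    norm_num
  have : ∑' i, |f i| ≤ 2 * (1/2 : ℝ) ^ n := by
    rw [← hsplit, hzero, zero_add]
    rw [← hval]
    exact htb
  linarith

lemma defD_succ (b : ℕ → ℕ) (j : ℕ) :
    defD b (j + 1) = defD b j + 1 - 2 * (b j : ℤ) := by
  simp only [defD, Finset.sum_range_succ]
  push_cast
  ring

lemma defD_congr {b c : ℕ → ℕ} (j : ℕ) (h : ∀ i < j, b i = c i) :
    defD b j = defD c j := by
  unfold defD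
  congr 1
  congr 1
  apply Finset.sum_congr rfl
  intro i hi
  simp only [Finset.mem_range] at hi
  rw [h i hi]

lemma defD_nonneg_of (b : ℕ → ℕ) (hD : ∀ j ≥ 1, 0 ≤ defD b j) : ∀ n, 0 ≤ defD b n := by
  intro n
  cases n with
  | zero => simp [defD]
  | succ m => exact hD (m + 1) (by omega)

theorem omegaL_perfect : ∀ x ∈ OmegaL, AccPt x (Filter.principal OmegaL) := by
  rintro x ⟨b, ⟨hb1, hbx⟩, hD⟩
  have hDall := defD_nonneg_of b hD
  rw [accPt_iff_nhds]
  intro U hU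
  obtain ⟨ε, hε, hball⟩ := Metric.mem_nhds_iff.1 hU
  obtain ⟨n, hn⟩ : ∃ n : ℕ, (1/2 : ℝ) ^ n < ε / 2 :=
    exists_pow_lt_of_lt_one (by linarith) (by norm_num)
  have hn' : 2 * (1/2 : ℝ) ^ n < ε := by linarith
  -- two perturbed digit sequences
  set c0 : ℕ → ℕ := fun i => if i < n then b i else 0 with hc0
  set c1 : ℕ → ℕ := fun i => if i < n then b i else (i - n) % 2 with hc1
  have hc0le : ∀ i, c0 i ≤ 1 := by
    intro i; simp only [hc0]; split
    · exact hb1 i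
    · omega
  have hc1le : ∀ i, c1 i ≤ 1 := by
    intro i; simp only [hc1]; split
    · exact hb1 i
    · omega
  set y0 : ℝ := ∑' i : ℕ, (c0 i : ℝ) / 2 ^ (i + 1) with hy0
  set y1 : ℝ := ∑' i : ℕ, (c1 i : ℝ) / 2 ^ (i + 1) with hy1
  -- defD facts
  have hagree0 : ∀ i < n, c0 i = b i := by intro i hi; simp [hc0, hi]
  have hagree1 : ∀ i < n, c1 i = b i := by intro i hi; simp [hc1, hi]
  have hD0 : ∀ j ≥ 1, 0 ≤ defD c0 j := by
    have key : ∀ m : ℕ, defD c0 (n + m) = defD b n + m := by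
      intro m
      induction m with
      | zero => simpa using defD_congr n hagree0
      | succ k ih =>
        have hck : c0 (n + k) = 0 := by simp [hc0]
        rw [← add_assoc, defD_succ, ih, hck]
        push_cast
        ring
    intro j _
    rcases le_or_gt j n with h | h
    · rw [defD_congr j (fun i hi => hagree0 i (lt_of_lt_of_le hi h))]
      exact hDall j
    · obtain ⟨m, rfl⟩ : ∃ m, j = n + m := ⟨j - n, by omega⟩
      rw [key m]
      have := hDall n
      positivity
  have hD1 : ∀ j ≥ 1, 0 ≤ defD c1 j := by
    have key : ∀ m : ℕ, defD c1 (n + m) = defD b n + (m % 2 : ℕ) := by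
      intro m
      induction m with
      | zero => simpa using defD_congr n hagree1
      | succ k ih =>
        have hck : c1 (n + k) = k % 2 := by simp [hc1]
        rw [← add_assoc, defD_succ, ih, hck]
        omega
    intro j _
    rcases le_or_gt j n with h | h
    · rw [defD_congr j (fun i hi => hagree1 i (lt_of_lt_of_le hi h))]
      exact hDall j
    · obtain ⟨m, rfl⟩ : ∃ m, j = n + m := ⟨j - n, by omega⟩
      rw [key m]
      have := hDall n
      positivity
  have hmem0 : y0 ∈ OmegaL := ⟨c0, ⟨hc0le, rfl⟩, hD0⟩
  have hmem1 : y1 ∈ OmegaL := ⟨c1, ⟨hc1le, rfl⟩, hD1⟩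
  -- y0 < y1
  have hlt : y0 < y1 := by
    have hle : ∀ i : ℕ, (c0 i : ℝ) / 2 ^ (i + 1) ≤ (c1 i : ℝ) / 2 ^ (i + 1) := by
      intro i
      rcases lt_or_ge i n with h | h
      · rw [hagree0 i h, hagree1 i h]
      · have h0 : c0 i = 0 := by simp [hc0, not_lt.2 h]
        rw [h0]
        simp only [Nat.cast_zero, zero_div]
        positivity
    have hi : (c0 (n + 1) : ℝ) / 2 ^ (n + 1 + 1) < (c1 (n + 1) : ℝ) / 2 ^ (n + 1 + 1) := by
      have h0 : c0 (n + 1) = 0 := by simp [hc0]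
      have h1 : c1 (n + 1) = 1 := by simp [hc1]
      rw [h0, h1]
      simp only [Nat.cast_zero, zero_div, Nat.cast_one]
      positivity
    exact Summable.tsum_lt_tsum hle hi (summable_digits hc0le) (summable_digits hc1le)
  -- distances
  have hd0 : |y0 - x| < ε := by
    rw [hbx]
    exact lt_of_le_of_lt (tsum_digits_dist_le hc0le hb1 n hagree0) hn'
  have hd1 : |y1 - x| < ε := by
    rw [hbx]
    exact lt_of_le_of_lt (tsum_digits_dist_le hc1le hb1 n hagree1) hn'
  rcases ne_or_eq y0 x with h | h
  · exact ⟨y0, ⟨hball (by simpa [Metric.mem_ball, Real.dist_eq] using hd0), hmem0⟩, h⟩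
  · refine ⟨y1, ⟨hball (by simpa [Metric.mem_ball, Real.dist_eq] using hd1), hmem1⟩, ?_⟩
    rw [← h]
    exact hlt.ne'
end
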